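/- arXiv:2410.13920 — 4 statements merged into one kernel-verified Lean document; each statement's English description precedes it below -/
import Mathlib

section
/- For every p ∈ D_d, the set P(p) equals the convex hull, taken in the vector space ℝ^X, of the finite set { f^σ : σ a selection }. In particular P(p) is a nonempty compact convex polytope. -/
open Finset MeasureTheory Real

noncomputable section

/-- Weight of a binary vector: number of ones. -/
def wt {d : ℕ} (x : Fin d → Bool) : ℕ := (Finset.univ.filter (fun i => x i = true)).card

/-- The set `F_d` of `d`-variate Bernoulli pmfs. -/
def Fd (d : ℕ) : Set ((Fin d → Bool) → ℝ) :=
  {f | (∀ x, 0 ≤ f x) ∧ ∑ x, f x = 1}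

/-- The simplex `D_d` of pmfs on `{0,…,d}`. -/
def Dd (d : ℕ) : Set (Fin (d + 1) → ℝ) :=
  {p | (∀ k, 0 ≤ p k) ∧ ∑ k, p k = 1}

/-- The pmf of the sum of the coordinates: `s(f)_k = ∑_{x : w(x)=k} f(x)`. -/
def sumPmf {d : ℕ} (f : (Fin d → Bool) → ℝ) : Fin (d + 1) → ℝ :=
  fun k => ∑ x ∈ Finset.univ.filter (fun x : Fin d → Bool => wt x = (k : ℕ)), f x

/-- `P(p) = { f ∈ F_d : s(f) = p }`. -/
def Pp (d : ℕ) (p : Fin (d + 1) → ℝ) : Set ((Fin d → Bool) → ℝ) :=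
  {f | f ∈ Fd d ∧ sumPmf f = p}

/-- A selection: `σ(k)` is a binary vector of weight `k` for each `k`. -/
def IsSelection {d : ℕ} (σ : Fin (d + 1) → (Fin d → Bool)) : Prop :=
  ∀ k, wt (σ k) = (k : ℕ)

/-- The extremal pmf `f^σ`: mass `p_k` at `σ(k)`, zero elsewhere. -/
def extPmf {d : ℕ} (p : Fin (d + 1) → ℝ) (σ : Fin (d + 1) → (Fin d → Bool)) :
    (Fin d → Bool) → ℝ :=
  fun x => ∑ k, if σ k = x then p k else 0

-- auxiliary

lemma wt_le {d : ℕ} (x : Fin d → Bool) : wt x ≤ d := by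
  unfold wt
  exact (Finset.card_filter_le _ _).trans_eq (by simp)

def Wfin {d : ℕ} (x : Fin d → Bool) : Fin (d + 1) := ⟨wt x, Nat.lt_succ_of_le (wt_le x)⟩

def Vset (d : ℕ) (k : Fin (d + 1)) : Finset (Fin d → Bool) :=
  Finset.univ.filter (fun x => wt x = (k : ℕ))

lemma mem_Vset {d : ℕ} {k : Fin (d+1)} {x : Fin d → Bool} :
    x ∈ Vset d k ↔ wt x = (k : ℕ) := by simp [Vset]

lemma mem_Vset_iff {d : ℕ} {k : Fin (d+1)} {x : Fin d → Bool} :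
    x ∈ Vset d k ↔ k = Wfin x := by
  rw [mem_Vset]
  constructor
  · intro h; exact Fin.val_injective (by simpa [Wfin] using h.symm)
  · intro h; simp [h, Wfin]

def sel0 {d : ℕ} : Fin (d+1) → (Fin d → Bool) := fun k i => decide ((i:ℕ) < (k:ℕ))

lemma isSel_sel0 {d : ℕ} : IsSelection (sel0 (d := d)) := by
  intro k
  have hk : (k:ℕ) ≤ d := Nat.lt_succ_iff.mp k.isLt
  unfold wt sel0
  simp only [decide_eq_true_eq]
  have : (Finset.univ.filter (fun i : Fin d => (i:ℕ) < (k:ℕ))).card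
      = (Finset.range (k:ℕ)).card := by
    refine Finset.card_bij (fun (i : Fin d) _ => (i : ℕ)) ?_ ?_ ?_
    · intro a ha; simp at ha ⊢; omega
    · intro a ha b hb h; exact Fin.val_injective h
    · intro b hb; simp at hb; exact ⟨⟨b, by omega⟩, by simpa using hb, rfl⟩
  rw [this, Finset.card_range]

lemma extPmf_mem {d : ℕ} {p : Fin (d+1) → ℝ} (hp : p ∈ Dd d)
    {σ : Fin (d+1) → (Fin d → Bool)} (hσ : IsSelection σ) : extPmf p σ ∈ Pp d p := by
  obtain ⟨hp0, hp1⟩ := hp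
  refine ⟨⟨fun x => Finset.sum_nonneg fun k _ => by split_ifs; exacts [hp0 k, le_refl 0], ?_⟩, ?_⟩
  · show ∑ x : Fin d → Bool, ∑ k, (if σ k = x then p k else 0) = 1
    rw [Finset.sum_comm]
    simpa using hp1
  · funext m
    show ∑ x ∈ Vset d m, ∑ k, (if σ k = x then p k else 0) = p m
    rw [Finset.sum_comm]
    have : ∀ k : Fin (d+1), (∑ x ∈ Vset d m, if σ k = x then p k else 0)
        = if k = m then p k else 0 := by
      intro k
      rw [Finset.sum_ite_eq (Vset d m) (σ k) (fun _ => p k)]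
      congr 1
      rw [mem_Vset]
      simp only [hσ k, eq_iff_iff]
      exact ⟨fun h => Fin.val_injective h, fun h => by rw [h]⟩
    simp only [this]
    simp

lemma Pp_convex {d : ℕ} (p : Fin (d+1) → ℝ) : Convex ℝ (Pp d p) := by
  rintro f ⟨⟨hf0, hf1⟩, hfs⟩ g ⟨⟨hg0, hg1⟩, hgs⟩ a b ha hb hab
  refine ⟨⟨fun x => add_nonneg (mul_nonneg ha (hf0 x)) (mul_nonneg hb (hg0 x)), ?_⟩, ?_⟩
  · show ∑ x : Fin d → Bool, (a * f x + b * g x) = 1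
    rw [Finset.sum_add_distrib, ← Finset.mul_sum, ← Finset.mul_sum, hf1, hg1, mul_one, mul_one,
      hab]
  · funext m
    have hf := congrFun hfs m
    have hg := congrFun hgs m
    unfold sumPmf at hf hg ⊢
    show ∑ x ∈ _, (a * f x + b * g x) = p m
    rw [Finset.sum_add_distrib, ← Finset.mul_sum, ← Finset.mul_sum, hf, hg, ← add_mul, hab,
      one_mul]

/-- `P(p)` is the convex hull of the extremal pmfs `f^σ`; in particular it is a
nonempty compact convex polytope. -/
theorem polytope_eq_convexHull_extremals (d : ℕ) (hd : 1 ≤ d)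
    (p : Fin (d + 1) → ℝ) (hp : p ∈ Dd d) :
    Pp d p = convexHull ℝ {g | ∃ σ, IsSelection σ ∧ g = extPmf p σ} ∧
      {g | ∃ σ, IsSelection σ ∧ g = extPmf p σ}.Finite ∧
      (Pp d p).Nonempty ∧ Convex ℝ (Pp d p) ∧ IsCompact (Pp d p) := by
  classical
  obtain ⟨hp0, hp1⟩ := hp
  set S : Set ((Fin d → Bool) → ℝ) := {g | ∃ σ, IsSelection σ ∧ g = extPmf p σ} with hS
  have hSsub : S ⊆ Pp d p := by
    rintro g ⟨σ, hσ, rfl⟩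
    exact extPmf_mem ⟨hp0, hp1⟩ hσ
  have hfin : S.Finite :=
    Set.Finite.subset (Set.finite_range (fun σ => extPmf p σ))
      (by rintro g ⟨σ, _, rfl⟩; exact ⟨σ, rfl⟩)
  have hconv := Pp_convex (d := d) p
  -- hard direction
  have hsub : Pp d p ⊆ convexHull ℝ S := by
    rintro f ⟨⟨hf0, hf1⟩, hfs⟩
    have hsum : ∀ k : Fin (d+1), ∑ x ∈ Vset d k, f x = p k := fun k => congrFun hfs k
    set q : Fin (d+1) → (Fin d → Bool) → ℝ := fun k x =>
      if wt x = (k:ℕ) then (if p k = 0 then (if x = sel0 k then 1 else 0) else f x / p k)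
      else 0 with hq
    have hq0 : ∀ k x, 0 ≤ q k x := by
      intro k x
      simp only [hq]
      split_ifs with h1 h2 h3
      · norm_num
      · norm_num
      · exact div_nonneg (hf0 x) (hp0 k)
      · exact le_refl 0
    have hq1 : ∀ k : Fin (d+1), ∑ y ∈ Vset d k, q k y = 1 := by
      intro k
      by_cases hpk : p k = 0
      · have h1 : ∀ y ∈ Vset d k, q k y = if y = sel0 k then 1 else 0 := by
          intro y hy
          rw [mem_Vset] at hy
          simp [hq, hy, hpk]
        rw [Finset.sum_congr rfl h1, Finset.sum_ite_eq' (Vset d k) (sel0 k) (fun _ => (1:ℝ))]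
        rw [if_pos (mem_Vset.mpr (isSel_sel0 k))]
      · have h1 : ∀ y ∈ Vset d k, q k y = f y / p k := by
          intro y hy; rw [mem_Vset] at hy; simp [hq, hy, hpk]
        rw [Finset.sum_congr rfl h1, ← Finset.sum_div, hsum k, div_self hpk]
    have hkey : ∀ x, f x = p (Wfin x) * q (Wfin x) x := by
      intro x
      have hwx : wt x = ((Wfin x):ℕ) := rfl
      by_cases hpk : p (Wfin x) = 0
      · have hx0 : f x = 0 := by
          have h := hsum (Wfin x)
          rw [hpk] at h
          exact (Finset.sum_eq_zero_iff_of_nonneg (fun y _ => hf0 y)).mp h x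
            (mem_Vset.mpr hwx)
        simp [hx0, hpk]
      · simp only [hq, ← hwx, if_true, if_neg hpk, if_pos rfl]
        field_simp
    set Sel : Finset (Fin (d+1) → (Fin d → Bool)) := Fintype.piFinset (Vset d) with hSel
    have hmemSel : ∀ σ, σ ∈ Sel ↔ IsSelection σ := by
      intro σ
      simp [hSel, Fintype.mem_piFinset, mem_Vset, IsSelection]
    have hw0 : ∀ σ ∈ Sel, (0:ℝ) ≤ ∏ k, q k (σ k) :=
      fun σ _ => Finset.prod_nonneg fun k _ => hq0 k (σ k)
    have hw1 : ∑ σ ∈ Sel, ∏ k, q k (σ k) = 1 := by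
      rw [hSel, ← Finset.prod_univ_sum]
      simp [hq1]
    have hrep : f = ∑ σ ∈ Sel, (∏ k, q k (σ k)) • extPmf p σ := by
      funext x
      rw [Finset.sum_apply]
      have hterm : ∀ σ : Fin (d+1) → (Fin d → Bool), ((∏ k, q k (σ k)) • extPmf p σ) x
          = ∑ j, ∏ k, (q k (σ k) * (if k = j then (if σ k = x then p j else 0) else 1)) := by
        intro σ
        simp only [Pi.smul_apply, smul_eq_mul, extPmf, Finset.mul_sum]
        refine Finset.sum_congr rfl fun j _ => ?_
        rw [Finset.prod_mul_distrib, Finset.prod_ite_eq' Finset.univ j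
          (fun k => if σ k = x then p j else 0)]
        simp
      simp only [hterm]
      rw [Finset.sum_comm]
      have hcol : ∀ j : Fin (d+1),
          (∑ σ ∈ Sel, ∏ k, (q k (σ k) * (if k = j then (if σ k = x then p j else 0) else 1)))
          = if j = Wfin x then q j x * p j else 0 := by
        intro j
        have hfac : ∀ k : Fin (d+1),
            (∑ y ∈ Vset d k, q k y * (if k = j then (if y = x then p j else 0) else 1))
            = if k = j then (if j = Wfin x then q j x * p j else 0) else 1 := by
          intro k
          by_cases hkj : k = j
          · rcases hkj with rfl
            simp only [eq_self_iff_true, if_true]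
            have h2 : ∀ y ∈ Vset d k, q k y * (if y = x then p k else 0)
                = if y = x then q k y * p k else 0 := by
              intro y _; split_ifs <;> simp
            rw [Finset.sum_congr rfl h2,
              Finset.sum_ite_eq' (Vset d k) x (fun y => q k y * p k)]
            by_cases hx : k = Wfin x
            · rw [if_pos (mem_Vset_iff.mpr hx), if_pos hx]
            · rw [if_neg (fun h => hx (mem_Vset_iff.mp h)), if_neg hx]
          · simp only [if_neg hkj, mul_one]
            exact hq1 k
        have hpus := Finset.prod_univ_sum (Vset d)
          (fun k y => q k y * (if k = j then (if y = x then p j else 0) else 1))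
        rw [← hpus, Finset.prod_congr rfl fun k _ => hfac k,
          Finset.prod_ite_eq' Finset.univ j
            (fun _ => if j = Wfin x then q j x * p j else 0)]
        simp
      rw [Finset.sum_congr rfl fun j _ => hcol j,
        Finset.sum_ite_eq' Finset.univ (Wfin x) (fun j => q j x * p j)]
      simp only [Finset.mem_univ, if_true]
      rw [mul_comm]
      exact hkey x
    rw [hrep]
    refine (convex_convexHull ℝ S).sum_mem hw0 hw1 fun σ hσ => ?_
    exact subset_convexHull ℝ S ⟨σ, (hmemSel σ).mp hσ, rfl⟩
  have heq : Pp d p = convexHull ℝ S :=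
    le_antisymm hsub (convexHull_min hSsub hconv)
  refine ⟨heq, hfin, ⟨extPmf p sel0, extPmf_mem ⟨hp0, hp1⟩ isSel_sel0⟩, hconv, ?_⟩
  rw [heq]
  exact hfin.isCompact_convexHull ℝ
end
end

section
/- For every p ∈ D_d, the set { f^σ : σ a selection } (equivalently, the set of extreme points of P(p)) is finite with cardinality ∏_{k : p_k > 0} C(d,k), the product of the binomial coefficients C(d,k) over the support of p. -/
open Finset MeasureTheory Real

noncomputable section

/-!
Only the values of a selection on the support of `p` are visible in `f^σ`, and they are
visible completely: `f^σ(σ k) = p_k`, and a selection meets each weight class at most once, so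
`σ k` is recovered from `f^σ` whenever `p_k ≠ 0`. Hence the extremal pmfs correspond bijectively
to choices of one weight-`k` vector for every `k` in the support, and there are `C(d,k)` of those.
-/

def weightSlice (d m : ℕ) : Finset (Fin d → Bool) := {x | wt x = m}

@[simp]
lemma mem_weightSlice {d m : ℕ} {x : Fin d → Bool} : x ∈ weightSlice d m ↔ wt x = m := by
  simp [weightSlice]

lemma card_weightSlice (d m : ℕ) : #(weightSlice d m) = d.choose m := by
  rw [show d.choose m = #(powersetCard m (univ : Finset (Fin d))) by simp]
  refine card_nbij' (fun x => ({i | x i} : Finset (Fin d))) (fun s i => decide (i ∈ s)) ?_ ?_ ?_ ?_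
  · intro x hx
    simpa [wt] using hx
  · intro s hs
    simpa [wt] using hs
  · intro x _
    ext i
    simp
  · intro s _
    ext i
    simp

lemma weightSlice_nonempty {d m : ℕ} (hm : m ≤ d) : (weightSlice d m).Nonempty :=
  card_pos.mp (by rw [card_weightSlice]; exact Nat.choose_pos hm)

lemma exists_isSelection (d : ℕ) : ∃ σ : Fin (d + 1) → Fin d → Bool, IsSelection σ := by
  choose σ hσ using fun k : Fin (d + 1) => weightSlice_nonempty (Nat.le_of_lt_succ k.isLt)
  exact ⟨σ, fun k => mem_weightSlice.mp (hσ k)⟩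

section Selection

variable {d : ℕ} {σ τ : Fin (d + 1) → Fin d → Bool}

lemma IsSelection.eq_of_apply_eq (hσ : IsSelection σ) (hτ : IsSelection τ) {j k : Fin (d + 1)}
    (h : σ j = τ k) : j = k :=
  Fin.ext (by rw [← hσ j, ← hτ k, h])

lemma IsSelection.injective (hσ : IsSelection σ) : Function.Injective σ :=
  fun _ _ => hσ.eq_of_apply_eq hσ

variable (p : Fin (d + 1) → ℝ)

lemma extPmf_apply_self (hσ : IsSelection σ) (k : Fin (d + 1)) : extPmf p σ (σ k) = p k := by
  simp [extPmf, hσ.injective.eq_iff]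

lemma extPmf_congr (h : ∀ k, p k ≠ 0 → σ k = τ k) : extPmf p σ = extPmf p τ := by
  funext x
  refine sum_congr rfl fun k _ => ?_
  by_cases hk : p k = 0 <;> simp [hk, h]

lemma IsSelection.apply_eq_of_extPmf_eq (hσ : IsSelection σ) (hτ : IsSelection τ)
    (h : extPmf p σ = extPmf p τ) {k : Fin (d + 1)} (hk : p k ≠ 0) : σ k = τ k := by
  have hne : extPmf p τ (σ k) ≠ 0 := by rwa [← h, extPmf_apply_self p hσ]
  obtain ⟨j, -, hj⟩ := exists_ne_zero_of_sum_ne_zero hne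
  have hτj : τ j = σ k := by
    by_contra hne'
    simp [hne'] at hj
  rw [← hτj, hτ.eq_of_apply_eq hσ hτj]

end Selection

section Pinned

variable {d : ℕ} (p : Fin (d + 1) → ℝ) {σ₀ : Fin (d + 1) → Fin d → Bool}

def pinnedSelections (σ₀ : Fin (d + 1) → Fin d → Bool) : Finset (Fin (d + 1) → Fin d → Bool) :=
  Fintype.piFinset fun k => if p k = 0 then {σ₀ k} else weightSlice d k

lemma mem_pinnedSelections {σ : Fin (d + 1) → Fin d → Bool} :
    σ ∈ pinnedSelections p σ₀ ↔ ∀ k, (p k = 0 → σ k = σ₀ k) ∧ (p k ≠ 0 → wt (σ k) = k) := by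
  simp only [pinnedSelections, Fintype.mem_piFinset]
  refine forall_congr' fun k => ?_
  by_cases hk : p k = 0 <;> simp [hk]

lemma card_pinnedSelections :
    #(pinnedSelections p σ₀) = ∏ k with p k ≠ 0, d.choose k := by
  rw [pinnedSelections, Fintype.card_piFinset, prod_filter]
  refine prod_congr rfl fun k _ => ?_
  by_cases hk : p k = 0 <;> simp [hk, card_weightSlice]

variable (hσ₀ : IsSelection σ₀)
include hσ₀

lemma IsSelection.of_mem_pinnedSelections {σ : Fin (d + 1) → Fin d → Bool}
    (hσ : σ ∈ pinnedSelections p σ₀) : IsSelection σ := by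
  intro k
  have hk := (mem_pinnedSelections p).mp hσ k
  by_cases hpk : p k = 0
  · rw [hk.1 hpk, hσ₀ k]
  · exact hk.2 hpk

lemma image_extPmf_eq_image_pinnedSelections :
    extPmf p '' {σ | IsSelection σ} = (pinnedSelections p σ₀).image (extPmf p) := by
  ext g
  simp only [Set.mem_image, Set.mem_ofPred_eq, coe_image, mem_coe]
  constructor
  · rintro ⟨σ, hσ, rfl⟩
    refine ⟨fun k => if p k = 0 then σ₀ k else σ k, ?_, extPmf_congr p fun k hk => by simp [hk]⟩
    rw [mem_pinnedSelections]
    intro k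
    by_cases hk : p k = 0 <;> simp [hk, hσ k]
  · rintro ⟨σ, hσ, rfl⟩
    exact ⟨σ, hσ₀.of_mem_pinnedSelections p hσ, rfl⟩

lemma injOn_extPmf_pinnedSelections : Set.InjOn (extPmf p) (pinnedSelections p σ₀) := by
  intro σ hσ τ hτ h
  have hσ' := hσ₀.of_mem_pinnedSelections p hσ
  have hτ' := hσ₀.of_mem_pinnedSelections p hτ
  funext k
  by_cases hk : p k = 0
  · rw [((mem_pinnedSelections p).mp hσ k).1 hk, ((mem_pinnedSelections p).mp hτ k).1 hk]
  · exact hσ'.apply_eq_of_extPmf_eq p hτ' h hk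

end Pinned

lemma ncard_image_extPmf {d : ℕ} (p : Fin (d + 1) → ℝ) :
    (extPmf p '' {σ | IsSelection σ}).ncard = ∏ k with p k ≠ 0, d.choose k := by
  obtain ⟨σ₀, hσ₀⟩ := exists_isSelection d
  rw [image_extPmf_eq_image_pinnedSelections p hσ₀, Set.ncard_coe_finset,
    card_image_of_injOn (injOn_extPmf_pinnedSelections p hσ₀), card_pinnedSelections]

theorem card_extremals_general (d : ℕ) (p : Fin (d + 1) → ℝ) (hp : p ∈ Dd d) :
    {g | ∃ σ, IsSelection σ ∧ g = extPmf p σ}.Finite ∧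
      {g | ∃ σ, IsSelection σ ∧ g = extPmf p σ}.ncard =
        ∏ k ∈ Finset.univ.filter (fun k : Fin (d + 1) => 0 < p k), Nat.choose d (k : ℕ) := by
  have hset : {g | ∃ σ, IsSelection σ ∧ g = extPmf p σ} = extPmf p '' {σ | IsSelection σ} := by
    ext g
    simp [eq_comm]
  have hsupp : univ.filter (fun k => 0 < p k) = univ.filter (fun k => p k ≠ 0) :=
    filter_congr fun k _ => (hp.1 k).lt_iff_ne'
  rw [hset, hsupp]
  exact ⟨(Set.toFinite _).image _, ncard_image_extPmf p⟩

/-- the set of extremal pmfs is finite with cardinality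
`∏_{k : p_k > 0} C(d,k)`. -/
theorem card_extremals (d : ℕ) (hd : 1 ≤ d) (p : Fin (d + 1) → ℝ) (hp : p ∈ Dd d) :
    {g | ∃ σ, IsSelection σ ∧ g = extPmf p σ}.Finite ∧
      {g | ∃ σ, IsSelection σ ∧ g = extPmf p σ}.ncard =
        ∏ k ∈ Finset.univ.filter (fun k : Fin (d + 1) => 0 < p k), Nat.choose d (k : ℕ) :=
  card_extremals_general d p hp
end
end

section
/- The symmetric binomial pmf converges to the maximal pmf in maximum distance as the dimension grows: lim_{d→∞} max_{0 ≤ k ≤ d} | C(d,k)/2^d − (C(d,k) − 1)/(2^d − d − 1) | = 0; i.e., for every ε > 0 there exists D such that for all d ≥ D and all 0 ≤ k ≤ d, | C(d,k)·2^{−d} − (C(d,k) − 1)/(2^d − d − 1) | < ε. -/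
open Finset Real Filter Topology

lemma aux_add_lt_two_pow {d : ℕ} (hd : 2 ≤ d) : d + 1 < 2 ^ d := by
  induction d with
  | zero => omega
  | succ n ih =>
    rcases Nat.lt_or_ge n 2 with h | h
    · interval_cases n <;> simp_all
    · have := ih h
      have : 2 ^ n ≥ 3 := by
        calc 2 ^ n ≥ 2 ^ 2 := Nat.pow_le_pow_right (by norm_num) h
        _ = 4 := by norm_num
        _ ≥ 3 := by norm_num
      simp [pow_succ]; omega

lemma aux_half {d : ℕ} (hd : 4 ≤ d) : (d : ℝ) + 1 ≤ 2 ^ d / 2 := by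
  have h : d + 1 ≤ 2 ^ (d - 1) := by
    have h2 : 2 ≤ d - 1 := by omega
    have := aux_add_lt_two_pow h2
    have hle : 2 ^ (d - 1 - 1 + 1) ≤ 2 ^ (d - 1) := Nat.pow_le_pow_right (by norm_num) (by omega)
    omega
  have : ((d : ℝ) + 1) ≤ (2 : ℝ) ^ (d - 1) := by exact_mod_cast h
  have hrw : (2 : ℝ) ^ (d - 1) = 2 ^ d / 2 := by
    rw [eq_div_iff (by norm_num), ← pow_succ]
    congr 1; omega
  linarith [hrw ▸ this]

lemma aux_choose_le {d k : ℕ} (hk : k ≤ d) : d.choose k ≤ 2 ^ d := by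
  calc d.choose k ≤ ∑ m ∈ Finset.range (d + 1), d.choose m :=
        Finset.single_le_sum (fun i _ => Nat.zero_le _) (Finset.mem_range.mpr (by omega))
    _ = 2 ^ d := Nat.sum_range_choose d

/-- the symmetric binomial pmf converges to the maximal pmf
`p^M_k = (C(d,k) − 1)/(2^d − d − 1)` in maximum distance as `d → ∞`. -/
theorem binomial_tendsto_maximal :
    ∀ ε : ℝ, 0 < ε → ∃ D : ℕ, ∀ d : ℕ, D ≤ d → ∀ k : ℕ, k ≤ d →
      |(Nat.choose d k : ℝ) / 2 ^ d -
          ((Nat.choose d k - 1 : ℕ) : ℝ) / ((2 ^ d - d - 1 : ℕ) : ℝ)| < ε := by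
  intro ε hε
  have htend : Tendsto (fun n : ℕ => 2 * (((n : ℝ) + 1) * (1/2) ^ n)) atTop (𝓝 0) := by
    have h1 : Tendsto (fun n : ℕ => (n : ℝ) * (1/2) ^ n) atTop (𝓝 0) :=
      tendsto_self_mul_const_pow_of_lt_one (by norm_num) (by norm_num)
    have h2 : Tendsto (fun n : ℕ => ((1:ℝ)/2) ^ n) atTop (𝓝 0) :=
      tendsto_pow_atTop_nhds_zero_of_lt_one (by norm_num) (by norm_num)
    have := ((h1.add h2).const_mul 2)
    simpa [mul_add, mul_comm, add_mul] using this
  have hev : ∀ᶠ d : ℕ in atTop, 2 * (((d : ℝ) + 1) * (1/2) ^ d) < ε :=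
    (htend.eventually (eventually_lt_nhds hε))
  obtain ⟨D0, hD0⟩ := eventually_atTop.mp hev
  refine ⟨max D0 4, fun d hd k hk => ?_⟩
  have hd4 : 4 ≤ d := le_trans (le_max_right _ _) hd
  have hdD : D0 ≤ d := le_trans (le_max_left _ _) hd
  have hbound := hD0 d hdD
  -- setup
  set A : ℝ := (Nat.choose d k : ℝ) with hA
  have hP : (0 : ℝ) < 2 ^ d := by positivity
  have hlt : d + 1 < 2 ^ d := aux_add_lt_two_pow (by omega)
  have hNnat : ((2 ^ d - d - 1 : ℕ) : ℝ) = 2 ^ d - (d : ℝ) - 1 := by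
    push_cast [Nat.sub_sub]
    rw [Nat.cast_sub (by omega)]
    push_cast; ring
  set N : ℝ := 2 ^ d - (d : ℝ) - 1 with hNdef
  have hhalf : (2 : ℝ) ^ d / 2 ≤ N := by
    have := aux_half hd4
    simp only [hNdef]; linarith
  have hN : (0 : ℝ) < N := lt_of_lt_of_le (by positivity) hhalf
  have hCpos : 1 ≤ d.choose k := Nat.one_le_iff_ne_zero.mpr (Nat.choose_pos hk).ne'
  have hA1 : (1 : ℝ) ≤ A := by rw [hA]; exact_mod_cast hCpos
  have hAP : A ≤ 2 ^ d := by rw [hA]; exact_mod_cast aux_choose_le hk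
  have hC1 : ((Nat.choose d k - 1 : ℕ) : ℝ) = A - 1 := by
    rw [Nat.cast_sub hCpos]; simp [hA]
  rw [hC1, hNnat]
  have hkey : A / 2 ^ d - (A - 1) / N = (2 ^ d - A * ((d : ℝ) + 1)) / (2 ^ d * N) := by
    field_simp
    simp only [hNdef]; ring
  rw [hkey, abs_div, abs_of_pos (mul_pos hP hN)]
  have hnum : |2 ^ d - A * ((d : ℝ) + 1)| ≤ 2 ^ d * ((d : ℝ) + 1) := by
    rw [abs_le]
    constructor
    · nlinarith [hA1, hAP]
    · nlinarith [hA1, hAP]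
  have hd1 : (0 : ℝ) < (d : ℝ) + 1 := by positivity
  calc |2 ^ d - A * ((d : ℝ) + 1)| / (2 ^ d * N)
      ≤ 2 ^ d * ((d : ℝ) + 1) / (2 ^ d * N) :=
        by gcongr
    _ = ((d : ℝ) + 1) / N := by
        rw [mul_div_mul_left _ _ hP.ne']
    _ ≤ ((d : ℝ) + 1) / (2 ^ d / 2) := by
        apply div_le_div_of_nonneg_left (le_of_lt hd1) (by positivity) hhalf
    _ = 2 * (((d : ℝ) + 1) * (1/2) ^ d) := by
        field_simp
        rw [← mul_pow]; norm_num
    _ < ε := hbound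
end

section
/- Let h : X → {0,…,d} be any surjective map and p ∈ D_d. Define P^h(p) = { f ∈ F_d : ∑_{x ∈ h^{−1}(y)} f(x) = p_y for every y ∈ {0,…,d} }. Then P^h(p) equals the convex hull, taken in ℝ^X, of the finite set of pmfs f^τ, where τ ranges over all maps τ : {0,…,d} → X with h(τ(y)) = y for all y (such τ are injective), and f^τ is defined by f^τ(τ(y)) = p_y for y = 0,…,d and f^τ(x) = 0 for x outside the range of τ. -/
open Finset MeasureTheory Real

noncomputable section

/-!
Every section `τ` of `h` gives a point `f^τ` of the convex set `P^h(p)`. Conversely, for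
`f ∈ P^h(p)` let `q_y` be the conditional law of `f` on the fibre `h⁻¹(y)` (a point mass on the
fibre when `p_y = 0`). Choosing each `τ(y)` independently with law `q_y` gives a random section,
and the mean of `f^τ` is `∑_y p_y q_y = f`.
-/

section

variable {X Y : Type*} [Fintype X] [DecidableEq Y]

/-- The paper's `P^h(p)`. -/
def fiberPolytope (h : X → Y) (p : Y → ℝ) : Set (X → ℝ) :=
  {f | f ∈ stdSimplex ℝ X ∧ ∀ y, ∑ x ∈ univ.filter (fun x => h x = y), f x = p y}

theorem convex_fiberPolytope (h : X → Y) (p : Y → ℝ) : Convex ℝ (fiberPolytope h p) := by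
  rw [fiberPolytope, Set.ofPred_and, Set.ofPred_mem_eq, Set.ofPred_forall]
  refine (convex_stdSimplex ℝ X).inter (convex_iInter fun y => convex_hyperplane ?_ (p y))
  exact ⟨fun f g => by simp only [Pi.add_apply, sum_add_distrib],
    fun c f => by simp only [Pi.smul_apply, smul_eq_mul, mul_sum]⟩

end

variable {X Y : Type*} [Fintype X] [Fintype Y] [DecidableEq X]

/-- The paper's `f^τ`. -/
def pushforward (p : Y → ℝ) (τ : Y → X) : X → ℝ :=
  fun x => ∑ y, if τ y = x then p y else 0

theorem sum_pushforward (p : Y → ℝ) (τ : Y → X) : ∑ x, pushforward p τ x = ∑ y, p y := by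
  simp only [pushforward]
  rw [sum_comm]
  simp

theorem exists_mem_stdSimplex_sum_mul_eq {s : Finset X} (hs : s.Nonempty) {f : X → ℝ}
    (hf : ∀ x ∈ s, 0 ≤ f x) :
    ∃ q ∈ stdSimplex ℝ X, (∀ x ∉ s, q x = 0) ∧ ∀ x ∈ s, (∑ x ∈ s, f x) * q x = f x := by
  by_cases hS : ∑ x ∈ s, f x = 0
  · obtain ⟨a, ha⟩ := hs
    have hf0 := (sum_eq_zero_iff_of_nonneg hf).1 hS
    refine ⟨Pi.single a 1, single_mem_stdSimplex ℝ a, fun x hx => ?_, fun x hx => ?_⟩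
    · exact Pi.single_eq_of_ne (ne_of_mem_of_not_mem ha hx).symm _
    · rw [hS, zero_mul, hf0 x hx]
  · refine ⟨fun x => if x ∈ s then f x / ∑ x ∈ s, f x else 0, ⟨fun x => ?_, ?_⟩,
      fun x hx => if_neg hx, fun x hx => ?_⟩
    · dsimp only
      split_ifs with hx
      exacts [div_nonneg (hf x hx) (sum_nonneg hf), le_rfl]
    · rw [← sum_filter, filter_mem_eq_inter, univ_inter, ← sum_div, div_self hS]
    · dsimp only
      rw [if_pos hx, mul_div_cancel₀ _ hS]

variable [DecidableEq Y]

theorem sum_filter_pushforward {h : X → Y} {τ : Y → X} (hτ : ∀ y, h (τ y) = y) (p : Y → ℝ)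
    (y₀ : Y) : ∑ x ∈ univ.filter (fun x => h x = y₀), pushforward p τ x = p y₀ := by
  simp only [pushforward]
  rw [sum_comm]
  simp [hτ]

theorem pushforward_mem_fiberPolytope {h : X → Y} {τ : Y → X} (hτ : ∀ y, h (τ y) = y)
    {p : Y → ℝ} (hp : p ∈ stdSimplex ℝ Y) : pushforward p τ ∈ fiberPolytope h p :=
  ⟨⟨fun _ => sum_nonneg fun y _ => by split_ifs <;> simp [hp.1 y],
    (sum_pushforward p τ).trans hp.2⟩, sum_filter_pushforward hτ p⟩

theorem sum_prod_apply_of_apply_eq {q : Y → X → ℝ} (hq : ∀ y, ∑ x, q y x = 1) (y : Y) (x : X) :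
    ∑ τ : Y → X, (if τ y = x then ∏ i, q i (τ i) else 0) = q y x := by
  have hfilter : univ.filter (fun τ : Y → X => τ y = x) =
      Fintype.piFinset (Function.update (fun _ : Y => (univ : Finset X)) y {x}) := by
    rw [Fintype.piFinset_update_singleton_eq_filter_piFinset_eq _ y (mem_univ x),
      Fintype.piFinset_univ]
  rw [← sum_filter, hfilter, ← prod_univ_sum, Fintype.prod_eq_single y fun i hi => by
      rw [Function.update_of_ne hi, hq]]
  simp

theorem sum_prod_smul_pushforward {q : Y → X → ℝ} (hq : ∀ y, ∑ x, q y x = 1) (p : Y → ℝ) :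
    ∑ τ : Y → X, (∏ y, q y (τ y)) • pushforward p τ = fun x => ∑ y, p y * q y x := by
  ext x
  simp only [Finset.sum_apply, Pi.smul_apply, smul_eq_mul, pushforward, mul_sum]
  rw [sum_comm]
  refine sum_congr rfl fun y _ => ?_
  rw [← sum_prod_apply_of_apply_eq hq y x, mul_sum]
  refine sum_congr rfl fun τ _ => ?_
  split_ifs <;> ring

theorem fiberPolytope_subset_convexHull {h : X → Y} (hh : Function.Surjective h) (p : Y → ℝ) :
    fiberPolytope h p ⊆
      convexHull ℝ {g | ∃ τ : Y → X, (∀ y, h (τ y) = y) ∧ g = pushforward p τ} := by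
  rintro f ⟨⟨hf0, -⟩, hfib⟩
  have hq : ∀ y, ∃ q ∈ stdSimplex ℝ X, (∀ x, h x ≠ y → q x = 0) ∧
      ∀ x, h x = y → p y * q x = f x := by
    intro y
    obtain ⟨x₀, hx₀⟩ := hh y
    obtain ⟨q, hq, hq0, hqf⟩ := exists_mem_stdSimplex_sum_mul_eq (s := univ.filter (h · = y))
      ⟨x₀, by simp [hx₀]⟩ (f := f) fun x _ => hf0 x
    exact ⟨q, hq, fun x hx => hq0 x (by simpa using hx),
      fun x hx => hfib y ▸ hqf x (by simpa using hx)⟩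
  choose q hq hq0 hqf using hq
  have hw0 : ∀ τ : Y → X, 0 ≤ ∏ y, q y (τ y) := fun τ => prod_nonneg fun y _ => (hq y).1 _
  have hw1 : ∑ τ : Y → X, ∏ y, q y (τ y) = 1 := by
    rw [← Fintype.prod_sum, prod_eq_one fun y _ => (hq y).2]
  have hf : f = ∑ τ : Y → X, (∏ y, q y (τ y)) • pushforward p τ := by
    rw [sum_prod_smul_pushforward fun y => (hq y).2]
    ext x
    rw [Fintype.sum_eq_single (h x) fun y hy => by rw [hq0 y x (Ne.symm hy), mul_zero],
      hqf _ x rfl]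
  rw [hf, ← finsum_eq_sum_of_fintype]
  refine (convex_convexHull ℝ _).finsum_mem hw0 (by rwa [finsum_eq_sum_of_fintype]) ?_
  intro τ hτ
  refine subset_convexHull ℝ _ ⟨τ, fun y => ?_, rfl⟩
  by_contra hy
  exact hτ (prod_eq_zero (mem_univ y) (hq0 y (τ y) hy))

theorem convexHull_pushforward_sections_eq_fiberPolytope {h : X → Y} (hh : Function.Surjective h) {p : Y → ℝ}
    (hp : p ∈ stdSimplex ℝ Y) :
    convexHull ℝ {g | ∃ τ : Y → X, (∀ y, h (τ y) = y) ∧ g = pushforward p τ} =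
      fiberPolytope h p :=
  (convexHull_min (by rintro _ ⟨τ, hτ, rfl⟩; exact pushforward_mem_fiberPolytope hτ hp)
    (convex_fiberPolytope h p)).antisymm (fiberPolytope_subset_convexHull hh p)

theorem polytope_general_map_general (d : ℕ)
    (h : (Fin d → Bool) → Fin (d + 1)) (hh : Function.Surjective h)
    (p : Fin (d + 1) → ℝ) (hp : p ∈ Dd d) :
    {f | f ∈ Fd d ∧ ∀ y : Fin (d + 1),
        ∑ x ∈ Finset.univ.filter (fun x : Fin d → Bool => h x = y), f x = p y} =
      convexHull ℝ
        {g | ∃ τ : Fin (d + 1) → (Fin d → Bool), (∀ y, h (τ y) = y) ∧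
          g = fun x => ∑ y, if τ y = x then p y else 0} :=
  (convexHull_pushforward_sections_eq_fiberPolytope hh hp).symm

/-- generalization to an arbitrary surjection `h : X → {0,…,d}`:
`P^h(p) = { f ∈ F_d : ∑_{x ∈ h⁻¹(y)} f(x) = p_y ∀ y }` is the convex hull of the pmfs
`f^τ` for sections `τ` of `h`. -/
theorem polytope_general_map (d : ℕ) (hd : 1 ≤ d)
    (h : (Fin d → Bool) → Fin (d + 1)) (hh : Function.Surjective h)
    (p : Fin (d + 1) → ℝ) (hp : p ∈ Dd d) :
    {f | f ∈ Fd d ∧ ∀ y : Fin (d + 1),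
        ∑ x ∈ Finset.univ.filter (fun x : Fin d → Bool => h x = y), f x = p y} =
      convexHull ℝ
        {g | ∃ τ : Fin (d + 1) → (Fin d → Bool), (∀ y, h (τ y) = y) ∧
          g = fun x => ∑ y, if τ y = x then p y else 0} :=
  polytope_general_map_general d h hh p hp
end
end
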